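/- Let G be generated by a finite set S. If I[G] = I²[G], then the map D : M_{|S|×|S|}(I[G]) → I[G] given by D(ξ) = ∑_{s,t∈S} (1-s)* ξ_{st} (1-t) is surjective. -/

import Mathlib

open MonoidAlgebra

variable {G : Type} [Group G]

/-- The additive map on the real group ring induced by `g ↦ g⁻¹`. -/
noncomputable def mstarHom (G : Type) [Group G] :
    MonoidAlgebra ℝ G →+ MonoidAlgebra ℝ G :=
  { toFun := MonoidAlgebra.mapDomain Inv.inv
    map_zero' := MonoidAlgebra.mapDomain_zero _
    map_add' := MonoidAlgebra.mapDomain_add _ }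

lemma mstarHom_single (a : G) (r : ℝ) :
    mstarHom G (MonoidAlgebra.single a r) = MonoidAlgebra.single a⁻¹ r :=
  MonoidAlgebra.mapDomain_single

private lemma mstar_mul (f g : MonoidAlgebra ℝ G) :
    mstarHom G (f * g) = mstarHom G g * mstarHom G f := by
  induction f using MonoidAlgebra.induction_linear with
  | zero => simp
  | add a b ha hb => simp only [add_mul, map_add, ha, hb, mul_add]
  | single a r =>
    induction g using MonoidAlgebra.induction_linear with
    | zero => simp
    | add c d hc hd => simp only [mul_add, map_add, hc, hd, add_mul]
    | single c s =>
      simp only [MonoidAlgebra.single_mul_single, mstarHom_single, mul_inv_rev,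
        mul_comm]

/-- The star ring structure on `ℝG` whose involution is induced by `g ↦ g⁻¹`. -/
noncomputable instance grpStar : StarRing (MonoidAlgebra ℝ G) where
  star f := mstarHom G f
  star_involutive f := by
    show mstarHom G (mstarHom G f) = f
    induction f using MonoidAlgebra.induction_linear with
    | zero => simp
    | add a b ha hb => simp only [map_add, ha, hb]
    | single a r => simp only [mstarHom_single, inv_inv]
  star_add f g := map_add _ f g
  star_mul f g := mstar_mul f g

/-- The augmentation ideal `I[G]`, as an `ℝ`-subspace of `ℝG`: the kernel of the
augmentation homomorphism sending every group element to `1`. -/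
noncomputable def Iaug (G : Type) [Group G] : Submodule ℝ (MonoidAlgebra ℝ G) :=
  LinearMap.ker ((MonoidAlgebra.lift ℝ ℝ G 1).toLinearMap)

/-- Sums of hermitian squares `∑ aᵢ* aᵢ` in a `*`-algebra. -/
noncomputable def SOS (A : Type*) [NonUnitalSemiring A] [StarRing A] : AddSubmonoid A :=
  AddSubmonoid.closure {x | ∃ a, x = star a * a}

/-- The map `D(ξ) = d* ξ d = ∑_{s,t ∈ S} (1-s)* ξ_{st} (1-t)`. -/
noncomputable def Dmap (S : Finset G) (ξ : Matrix S S (MonoidAlgebra ℝ G)) :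
    MonoidAlgebra ℝ G :=
  ∑ s : S, ∑ t : S,
    star (1 - MonoidAlgebra.of ℝ G (s : G)) * ξ s t * (1 - MonoidAlgebra.of ℝ G (t : G))

/-! ### Auxiliary lemmas -/

section Aux

lemma mem_Iaug_iff (x : MonoidAlgebra ℝ G) :
    x ∈ Iaug G ↔ (MonoidAlgebra.lift ℝ ℝ G 1) x = 0 := by
  simp [Iaug, LinearMap.mem_ker]

lemma aug_single (g : G) (r : ℝ) :
    (MonoidAlgebra.lift ℝ ℝ G 1) (MonoidAlgebra.single g r) = r := by
  simp [MonoidAlgebra.lift_single]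

lemma Iaug_mul_left (a : MonoidAlgebra ℝ G) {z : MonoidAlgebra ℝ G}
    (hz : z ∈ Iaug G) : a * z ∈ Iaug G := by
  rw [mem_Iaug_iff] at hz ⊢
  rw [map_mul, hz, mul_zero]

lemma Iaug_mul_right {z : MonoidAlgebra ℝ G} (a : MonoidAlgebra ℝ G)
    (hz : z ∈ Iaug G) : z * a ∈ Iaug G := by
  rw [mem_Iaug_iff] at hz ⊢
  rw [map_mul, hz, zero_mul]

lemma aug_star (x : MonoidAlgebra ℝ G) :
    (MonoidAlgebra.lift ℝ ℝ G 1) (star x) = (MonoidAlgebra.lift ℝ ℝ G 1) x := by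
  induction x using MonoidAlgebra.induction_linear with
  | zero => simp
  | add a b ha hb => rw [star_add, map_add, map_add, ha, hb]
  | single a r =>
    have : star (MonoidAlgebra.single a r : MonoidAlgebra ℝ G)
        = MonoidAlgebra.single a⁻¹ r := mstarHom_single a r
    rw [this, aug_single, aug_single]

lemma star_mem_Iaug {x : MonoidAlgebra ℝ G} (hx : x ∈ Iaug G) : star x ∈ Iaug G := by
  rw [mem_Iaug_iff] at hx ⊢
  rw [aug_star, hx]

/-- `x` has a representation `x = ∑_{s ∈ S} a_s (1 - s)`. -/
def HasRepr (S : Finset G) (x : MonoidAlgebra ℝ G) : Prop :=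
  ∃ a : G → MonoidAlgebra ℝ G, x = ∑ s ∈ S, a s * (1 - MonoidAlgebra.of ℝ G s)

lemma HasRepr.zero (S : Finset G) : HasRepr S (0 : MonoidAlgebra ℝ G) :=
  ⟨fun _ => 0, by simp⟩

lemma HasRepr.add {S : Finset G} {x y : MonoidAlgebra ℝ G}
    (hx : HasRepr S x) (hy : HasRepr S y) : HasRepr S (x + y) := by
  obtain ⟨a, ha⟩ := hx
  obtain ⟨b, hb⟩ := hy
  exact ⟨a + b, by simp [ha, hb, add_mul, Finset.sum_add_distrib]⟩

lemma HasRepr.mul_left {S : Finset G} (c : MonoidAlgebra ℝ G) {x : MonoidAlgebra ℝ G}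
    (hx : HasRepr S x) : HasRepr S (c * x) := by
  obtain ⟨a, ha⟩ := hx
  exact ⟨fun s => c * a s, by simp [ha, Finset.mul_sum, mul_assoc]⟩

lemma HasRepr.smul {S : Finset G} (r : ℝ) {x : MonoidAlgebra ℝ G}
    (hx : HasRepr S x) : HasRepr S (r • x) := by
  obtain ⟨a, ha⟩ := hx
  exact ⟨fun s => r • a s, by simp [ha, Finset.smul_sum, smul_mul_assoc]⟩

lemma hasRepr_of_sub_one {S : Finset G} (hS : Subgroup.closure (S : Set G) = ⊤)
    (g : G) : HasRepr S (MonoidAlgebra.of ℝ G g - 1) := by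
  classical
  have hg : g ∈ Subgroup.closure (S : Set G) := by rw [hS]; trivial
  induction hg using Subgroup.closure_induction with
  | mem s hs =>
    refine ⟨fun t => if t = s then -1 else 0, ?_⟩
    rw [Finset.sum_eq_single_of_mem s (Finset.mem_coe.mp hs) (fun b _ hb => by simp [hb])]
    simp
  | one => rw [map_one, sub_self]; exact HasRepr.zero S
  | mul x y hx hy ihx ihy =>
    have h : MonoidAlgebra.of ℝ G (x * y) - 1
        = MonoidAlgebra.of ℝ G x * (MonoidAlgebra.of ℝ G y - 1)
          + (MonoidAlgebra.of ℝ G x - 1) := by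
      rw [map_mul, mul_sub, mul_one]; abel
    rw [h]
    exact (ihy.mul_left _).add ihx
  | inv x hx ihx =>
    have h : MonoidAlgebra.of ℝ G x⁻¹ - 1
        = (-(MonoidAlgebra.of ℝ G x⁻¹)) * (MonoidAlgebra.of ℝ G x - 1) := by
      rw [neg_mul, mul_sub, ← map_mul, inv_mul_cancel, map_one, mul_one, neg_sub]
    rw [h]
    exact ihx.mul_left _

lemma hasRepr_of_mem_Iaug {S : Finset G} (hS : Subgroup.closure (S : Set G) = ⊤)
    {x : MonoidAlgebra ℝ G} (hx : x ∈ Iaug G) : HasRepr S x := by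
  have haug : ∑ g ∈ x.coeff.support, x.coeff g = 0 := by
    rw [mem_Iaug_iff] at hx
    rw [← hx, MonoidAlgebra.lift_apply]
    simp [Finsupp.sum]
  have hdecomp : x = ∑ g ∈ x.coeff.support, x.coeff g • (MonoidAlgebra.of ℝ G g - 1) := by
    have h1 : ∑ g ∈ x.coeff.support, x.coeff g • (MonoidAlgebra.of ℝ G g - 1)
        = (∑ g ∈ x.coeff.support, MonoidAlgebra.single g (x.coeff g))
          - (∑ g ∈ x.coeff.support, x.coeff g) • (1 : MonoidAlgebra ℝ G) := by
      rw [Finset.sum_smul, ← Finset.sum_sub_distrib]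
      refine Finset.sum_congr rfl fun g _ => ?_
      rw [smul_sub]
      congr 1
      rw [MonoidAlgebra.of_apply, MonoidAlgebra.smul_single, smul_eq_mul, mul_one]
    rw [h1, haug, zero_smul, sub_zero]
    exact (MonoidAlgebra.sum_coeff_single x).symm
  rw [hdecomp]
  refine Finset.sum_induction _ (HasRepr S) (fun a b ha hb => ha.add hb) (HasRepr.zero S)
    fun g _ => ?_
  exact (hasRepr_of_sub_one hS g).smul _

lemma Dmap_add (S : Finset G) (ξ ξ' : Matrix S S (MonoidAlgebra ℝ G)) :
    Dmap S (ξ + ξ') = Dmap S ξ + Dmap S ξ' := by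
  simp only [Dmap, Matrix.add_apply, mul_add, add_mul, Finset.sum_add_distrib]

end Aux

/-- If `I[G] = I²[G]`, then `D : M_{|S|×|S|}(I[G]) → I[G]` is surjective. -/
theorem D_surjective_of_idempotent (G : Type) [Group G] (S : Finset G)
    (hS : Subgroup.closure (S : Set G) = ⊤)
    (hidem : Iaug G = (Iaug G) ^ 2) :
    ∀ η ∈ Iaug G, ∃ ξ : Matrix S S (MonoidAlgebra ℝ G),
      (∀ s t : S, ξ s t ∈ Iaug G) ∧ Dmap S ξ = η := by
  have h2 : Iaug G = Iaug G * Iaug G := hidem.trans (pow_two _)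
  -- the key property, closed under addition
  set Q : MonoidAlgebra ℝ G → Prop := fun η =>
    ∃ ξ : Matrix S S (MonoidAlgebra ℝ G),
      (∀ s t : S, ξ s t ∈ Iaug G) ∧ Dmap S ξ = η with hQ
  have Qadd : ∀ {u v}, Q u → Q v → Q (u + v) := by
    rintro u v ⟨ξ, hξ, hD⟩ ⟨ξ', hξ', hD'⟩
    exact ⟨ξ + ξ', fun s t => Submodule.add_mem _ (hξ s t) (hξ' s t),
      by rw [Dmap_add, hD, hD']⟩
  intro η hη
  rw [h2] at hη
  refine Submodule.mul_induction_on hη (fun x hx w hw => ?_) (fun u v hu hv => Qadd hu hv)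
  rw [h2] at hw
  refine Submodule.mul_induction_on hw (fun z hz y hy => ?_)
    (fun u v hu hv => ?_)
  · -- base case : x * (z * y) with x z y ∈ Iaug
    obtain ⟨a, ha⟩ := hasRepr_of_mem_Iaug (S := S) hS (star_mem_Iaug hx)
    obtain ⟨c, hc⟩ := hasRepr_of_mem_Iaug (S := S) hS hy
    have hx' : x = ∑ s ∈ S, star (1 - MonoidAlgebra.of ℝ G s) * star (a s) := by
      conv_lhs => rw [← star_star x, ha]
      rw [star_sum]
      exact Finset.sum_congr rfl fun s _ => star_mul _ _
    refine ⟨fun s t => star (a (s : G)) * z * c (t : G),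
      fun s t => Iaug_mul_right _ (Iaug_mul_left _ hz), ?_⟩
    have key : x * (z * y) = ∑ s ∈ S, ∑ t ∈ S,
        star (1 - MonoidAlgebra.of ℝ G s) * (star (a s) * z * c t)
          * (1 - MonoidAlgebra.of ℝ G t) := by
      rw [hx', hc]
      simp only [Finset.sum_mul, Finset.mul_sum, mul_assoc]
      exact Finset.sum_comm
    unfold Dmap; rw [key]
    rw [Finset.sum_coe_sort S (fun s => ∑ t : S,
      star (1 - MonoidAlgebra.of ℝ G s) * (star (a s) * z * c (t : G))
        * (1 - MonoidAlgebra.of ℝ G (t : G)))]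
    exact Finset.sum_congr rfl fun s _ => Finset.sum_coe_sort S
      (fun t => star (1 - MonoidAlgebra.of ℝ G s) * (star (a s) * z * c t)
        * (1 - MonoidAlgebra.of ℝ G t))
  · have h : x * (u + v) = x * u + x * v := mul_add x u v
    rw [h]
    exact Qadd hu hv
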